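/- Let μ = 59729/19885499729 and c = (149896229/10)·√(1495978707/3317816087784734) (Earth–Sun values), and let Z0 = (2499985012616009587660193140271/5000000000000000000000000000000, 1082531750278361975463116188557/1250000000000000000000000000000). Then |f(Z0)| < 10⁻³¹ and |g(Z0)| < 10⁻³¹. -/

import Mathlib

/-- The Newtonian effective potential of the circular restricted three body problem. -/
noncomputable def w0 (μ ξ η : ℝ) : ℝ :=
  (ξ ^ 2 + η ^ 2) / 2 + (1 - μ) / Real.sqrt ((ξ + μ) ^ 2 + η ^ 2)
    + μ / Real.sqrt ((ξ + μ - 1) ^ 2 + η ^ 2)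

/-- The post-Newtonian correction `w1` to the effective potential, at zero synodic
velocity. -/
noncomputable def w1 (μ ξ η : ℝ) : ℝ :=
  let ρ := Real.sqrt (ξ ^ 2 + η ^ 2);
  let ρ1 := Real.sqrt ((ξ + μ) ^ 2 + η ^ 2);
  let ρ2 := Real.sqrt ((ξ + μ - 1) ^ 2 + η ^ 2);
  -(3 / 2) * (1 - μ * (1 - μ) / 3) * ρ ^ 2 + ρ ^ 4 / 8
    + (3 / 2) * ((1 - μ) / ρ1 + μ / ρ2) * ρ ^ 2
    - (1 / 2) * ((1 - μ) ^ 2 / ρ1 ^ 2 + μ ^ 2 / ρ2 ^ 2)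
    + μ * (1 - μ) * ((7 * ξ / 2) * (1 / ρ1 - 1 / ρ2)
        - (η ^ 2 / 2) * (μ / ρ1 ^ 3 + (1 - μ) / ρ2 ^ 3)
        + (3 * μ - 2) / (2 * ρ1) - 1 / (ρ1 * ρ2) + (1 - 3 * μ) / (2 * ρ2))

/-- The relativistic effective potential `W = w0 + w1/c²` at zero synodic velocity. -/
noncomputable def W (μ c ξ η : ℝ) : ℝ := w0 μ ξ η + w1 μ ξ η / c ^ 2

/-- `f = ∂W/∂ξ`, the first equilibrium equation of the post-Newtonian restricted
three body problem. -/
noncomputable def f (μ c ξ η : ℝ) : ℝ := deriv (fun s => W μ c s η) ξ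

/-- `g = ∂W/∂η`, the second equilibrium equation of the post-Newtonian restricted
three body problem. -/
noncomputable def g (μ c ξ η : ℝ) : ℝ := deriv (fun s => W μ c ξ s) η

/-! `W` depends on `ρ` only through `ρ² = ξ² + η²`, so it is a polynomial in `ξ`, `η`, `1/ρ1`,
`1/ρ2`, and its derivative along any differentiable curve, in particular along the coordinate
lines defining `f` and `g`, has a closed form. At `Z0` the squares `ρi²` are rational, so
`1/ρi = ρi / ρi²` turns these closed forms into `A + B ρ1 + C ρ2 + D ρ1 ρ2` with rational
coefficients, and 40-digit rational enclosures of `ρ1`, `ρ2` bound them below `10⁻³¹`. -/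

theorem pow_add_two_of_sq_eq {M : Type*} [Monoid M] {r q : M} (h : r ^ 2 = q) (n : ℕ) :
    r ^ (n + 2) = q * r ^ n := by
  rw [← h, ← pow_add, add_comm]

theorem inv_eq_of_sq_eq {K : Type*} [DivisionRing K] {r q : K} (h : r ^ 2 = q) :
    r⁻¹ = q⁻¹ * r := by
  rcases eq_or_ne r 0 with rfl | hr
  · simp
  · rw [← h, sq, mul_inv_rev, inv_mul_cancel_right₀ hr]

theorem HasDerivAt.sqrt_sq_add_sq {x y : ℝ → ℝ} {a b s : ℝ} (hx : HasDerivAt x a s)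
    (hy : HasDerivAt y b s) (hs : 0 < x s ^ 2 + y s ^ 2) :
    HasDerivAt (fun t => √(x t ^ 2 + y t ^ 2))
      ((x s * a + y s * b) / √(x s ^ 2 + y s ^ 2)) s := by
  refine (((hx.fun_pow 2).fun_add (hy.fun_pow 2)).sqrt hs.ne').congr_deriv ?_
  field_simp
  norm_num
  ring

noncomputable def rho1 (μ ξ η : ℝ) : ℝ := √((ξ + μ) ^ 2 + η ^ 2)

noncomputable def rho2 (μ ξ η : ℝ) : ℝ := √((ξ + μ - 1) ^ 2 + η ^ 2)

theorem w0_eq_inv_rho (μ ξ η : ℝ) :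
    w0 μ ξ η = (ξ ^ 2 + η ^ 2) / 2 + (1 - μ) * (rho1 μ ξ η)⁻¹ + μ * (rho2 μ ξ η)⁻¹ := by
  simp only [w0, rho1, rho2, div_eq_mul_inv]

theorem w1_eq_inv_rho (μ ξ η : ℝ) :
    w1 μ ξ η = let q := ξ ^ 2 + η ^ 2; let i1 := (rho1 μ ξ η)⁻¹; let i2 := (rho2 μ ξ η)⁻¹;
      -(3 / 2) * (1 - μ * (1 - μ) / 3) * q + q ^ 2 / 8 + (3 / 2) * ((1 - μ) * i1 + μ * i2) * q
      - (1 / 2) * ((1 - μ) ^ 2 * i1 ^ 2 + μ ^ 2 * i2 ^ 2)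
      + μ * (1 - μ) * ((7 * ξ / 2) * (i1 - i2) - (η ^ 2 / 2) * (μ * i1 ^ 3 + (1 - μ) * i2 ^ 3)
        + (3 * μ - 2) / 2 * i1 - i1 * i2 + (1 - 3 * μ) / 2 * i2) := by
  have hρ : √(ξ ^ 2 + η ^ 2) ^ 2 = ξ ^ 2 + η ^ 2 := Real.sq_sqrt (by positivity)
  simp only [w1, rho1, rho2, show ∀ r : ℝ, r ^ 4 = (r ^ 2) ^ 2 by intro r; ring, hρ]
  simp only [div_eq_mul_inv, mul_inv, inv_pow, one_mul]
  ring

noncomputable def w0Deriv (μ ξ η a b : ℝ) : ℝ :=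
  (ξ * a + η * b) - (1 - μ) * ((ξ + μ) * a + η * b) / rho1 μ ξ η ^ 3
    - μ * ((ξ + μ - 1) * a + η * b) / rho2 μ ξ η ^ 3

/-- `D`, `D1`, `D2` are the derivatives of `ρ² / 2`, `ρ1² / 2`, `ρ2² / 2` in the direction
`(a, b)`. -/
noncomputable def w1Deriv (μ ξ η a b : ℝ) : ℝ :=
  let ρ1 := rho1 μ ξ η; let ρ2 := rho2 μ ξ η
  let D := ξ * a + η * b; let D1 := (ξ + μ) * a + η * b; let D2 := (ξ + μ - 1) * a + η * b;
  -(3 - μ * (1 - μ)) * D + (ξ ^ 2 + η ^ 2) * D / 2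
    - (3 / 2) * (ξ ^ 2 + η ^ 2) * ((1 - μ) * D1 / ρ1 ^ 3 + μ * D2 / ρ2 ^ 3)
    + 3 * D * ((1 - μ) / ρ1 + μ / ρ2)
    + (1 - μ) ^ 2 * D1 / ρ1 ^ 4 + μ ^ 2 * D2 / ρ2 ^ 4
    + μ * (1 - μ) * ((7 * a / 2) * (1 / ρ1 - 1 / ρ2) - (7 * ξ / 2) * (D1 / ρ1 ^ 3 - D2 / ρ2 ^ 3)
      - η * b * (μ / ρ1 ^ 3 + (1 - μ) / ρ2 ^ 3)
      + (3 * η ^ 2 / 2) * (μ * D1 / ρ1 ^ 5 + (1 - μ) * D2 / ρ2 ^ 5)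
      - (3 * μ - 2) * D1 / (2 * ρ1 ^ 3) + (D1 / ρ1 ^ 2 + D2 / ρ2 ^ 2) / (ρ1 * ρ2)
      - (1 - 3 * μ) * D2 / (2 * ρ2 ^ 3))

noncomputable def WDeriv (μ c ξ η a b : ℝ) : ℝ := w0Deriv μ ξ η a b + w1Deriv μ ξ η a b / c ^ 2

section Curve

variable {μ s a b : ℝ} {x y : ℝ → ℝ}

theorem hasDerivAt_inv_rho1_comp (hx : HasDerivAt x a s) (hy : HasDerivAt y b s)
    (h1 : 0 < (x s + μ) ^ 2 + y s ^ 2) :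
    HasDerivAt (fun t => (rho1 μ (x t) (y t))⁻¹)
      (-((x s + μ) * a + y s * b) / rho1 μ (x s) (y s) ^ 3) s :=
  (((hx.add_const μ).sqrt_sq_add_sq hy h1).fun_inv (Real.sqrt_ne_zero'.mpr h1)).congr_deriv
    (by unfold rho1; ring)

theorem hasDerivAt_inv_rho2_comp (hx : HasDerivAt x a s) (hy : HasDerivAt y b s)
    (h2 : 0 < (x s + μ - 1) ^ 2 + y s ^ 2) :
    HasDerivAt (fun t => (rho2 μ (x t) (y t))⁻¹)
      (-((x s + μ - 1) * a + y s * b) / rho2 μ (x s) (y s) ^ 3) s :=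
  ((((hx.add_const μ).sub_const 1).sqrt_sq_add_sq hy h2).fun_inv
    (Real.sqrt_ne_zero'.mpr h2)).congr_deriv (by unfold rho2; ring)

variable (hx : HasDerivAt x a s) (hy : HasDerivAt y b s) (h1 : 0 < (x s + μ) ^ 2 + y s ^ 2)
  (h2 : 0 < (x s + μ - 1) ^ 2 + y s ^ 2)
include hx hy h1 h2

theorem hasDerivAt_w0_comp :
    HasDerivAt (fun t => w0 μ (x t) (y t)) (w0Deriv μ (x s) (y s) a b) s := by
  have hq := (hx.fun_pow 2).fun_add (hy.fun_pow 2)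
  have hi1 := hasDerivAt_inv_rho1_comp hx hy h1
  have hi2 := hasDerivAt_inv_rho2_comp hx hy h2
  simp only [w0_eq_inv_rho]
  refine (((hq.div_const 2).fun_add (hi1.const_mul (1 - μ))).fun_add
    (hi2.const_mul μ)).congr_deriv ?_
  simp only [w0Deriv]
  norm_num
  ring

theorem hasDerivAt_w1_comp :
    HasDerivAt (fun t => w1 μ (x t) (y t)) (w1Deriv μ (x s) (y s) a b) s := by
  have hq := (hx.fun_pow 2).fun_add (hy.fun_pow 2)
  have hi1 := hasDerivAt_inv_rho1_comp hx hy h1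
  have hi2 := hasDerivAt_inv_rho2_comp hx hy h2
  have hρ := ((hq.const_mul (-(3 / 2) * (1 - μ * (1 - μ) / 3))).fun_add
    ((hq.fun_pow 2).div_const 8)).fun_add
    ((((hi1.const_mul (1 - μ)).fun_add (hi2.const_mul μ)).const_mul (3 / 2)).fun_mul hq)
  have hInvSq := (((hi1.fun_pow 2).const_mul ((1 - μ) ^ 2)).fun_add
    ((hi2.fun_pow 2).const_mul (μ ^ 2))).const_mul (1 / 2)
  have hCoupling := ((((((hx.const_mul 7).div_const 2).fun_mul (hi1.fun_sub hi2)).fun_sub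
    (((hy.fun_pow 2).div_const 2).fun_mul
      (((hi1.fun_pow 3).const_mul μ).fun_add ((hi2.fun_pow 3).const_mul (1 - μ))))).fun_add
    (hi1.const_mul ((3 * μ - 2) / 2))).fun_sub (hi1.fun_mul hi2)).fun_add
    (hi2.const_mul ((1 - 3 * μ) / 2))
  simp only [w1_eq_inv_rho]
  refine ((hρ.fun_sub hInvSq).fun_add (hCoupling.const_mul (μ * (1 - μ)))).congr_deriv ?_
  have hr1 : rho1 μ (x s) (y s) ≠ 0 := Real.sqrt_ne_zero'.mpr h1
  have hr2 : rho2 μ (x s) (y s) ≠ 0 := Real.sqrt_ne_zero'.mpr h2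
  simp only [w1Deriv]
  norm_num
  field_simp
  ring

theorem hasDerivAt_W_comp (c : ℝ) :
    HasDerivAt (fun t => W μ c (x t) (y t)) (WDeriv μ c (x s) (y s) a b) s :=
  (hasDerivAt_w0_comp hx hy h1 h2).fun_add ((hasDerivAt_w1_comp hx hy h1 h2).div_const _)

end Curve

section Partials

variable {μ c ξ η : ℝ} (h1 : 0 < (ξ + μ) ^ 2 + η ^ 2) (h2 : 0 < (ξ + μ - 1) ^ 2 + η ^ 2)
include h1 h2

theorem f_eq_WDeriv : f μ c ξ η = WDeriv μ c ξ η 1 0 :=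
  (hasDerivAt_W_comp (hasDerivAt_id ξ) (hasDerivAt_const ξ η) h1 h2 c).deriv

theorem g_eq_WDeriv : g μ c ξ η = WDeriv μ c ξ η 0 1 :=
  (hasDerivAt_W_comp (hasDerivAt_const η ξ) (hasDerivAt_id η) h1 h2 c).deriv

end Partials

section EarthSun

local notation "μ₀" => (59729 / 19885499729 : ℝ)
local notation "ξ₀" => (2499985012616009587660193140271 / 5000000000000000000000000000000 : ℝ)
local notation "η₀" => (1082531750278361975463116188557 / 1250000000000000000000000000000 : ℝ)

theorem rho1_earth_sun_sq : rho1 μ₀ ξ₀ η₀ ^ 2 =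
    395433099472053211530310683486680619356606030198945225342618505375782697988552057 /
      395433099472059073441000000000000000000000000000000000000000000000000000000000000 := by
  rw [rho1, Real.sq_sqrt (by positivity)]
  norm_num

theorem rho2_earth_sun_sq : rho2 μ₀ ξ₀ η₀ ^ 2 =
    395433094593108307315677677938862031042833068741940825342618505375782697988552057 /
      395433099472059073441000000000000000000000000000000000000000000000000000000000000 := by
  rw [rho2, Real.sq_sqrt (by positivity)]
  norm_num

theorem rho1_earth_sun_mem : rho1 μ₀ ξ₀ η₀ ∈
    Set.Ioo (9999999999999925879868211048275241410525 / 10 ^ 40)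
      (9999999999999925879868211048275241410526 / 10 ^ 40) :=
  ⟨lt_of_pow_lt_pow_left₀ 2 (Real.sqrt_nonneg _) (by rw [rho1_earth_sun_sq]; norm_num),
    lt_of_pow_lt_pow_left₀ 2 (by norm_num) (by rw [rho1_earth_sun_sq]; norm_num)⟩

theorem rho2_earth_sun_mem : rho2 μ₀ ξ₀ η₀ ∈
    Set.Ioo (9999999938308770969240931669146714217749 / 10 ^ 40)
      (9999999938308770969240931669146714217750 / 10 ^ 40) :=
  ⟨lt_of_pow_lt_pow_left₀ 2 (Real.sqrt_nonneg _) (by rw [rho2_earth_sun_sq]; norm_num),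
    lt_of_pow_lt_pow_left₀ 2 (by norm_num) (by rw [rho2_earth_sun_sq]; norm_num)⟩

theorem abs_WDeriv_earth_sun_lt {c a b : ℝ}
    (hc : c = (149896229 / 10) * √(1495978707 / 3317816087784734))
    (hab : a = 1 ∧ b = 0 ∨ a = 0 ∧ b = 1) :
    |WDeriv μ₀ c ξ₀ η₀ a b| < 1 / 10 ^ 31 := by
  have hc2 : c ^ 2 = (149896229 / 10) ^ 2 * (1495978707 / 3317816087784734) := by
    rw [hc, mul_pow, Real.sq_sqrt (by norm_num)]
  have e1 := rho1_earth_sun_sq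
  have e2 := rho2_earth_sun_sq
  obtain ⟨l1, u1⟩ := rho1_earth_sun_mem
  obtain ⟨l2, u2⟩ := rho2_earth_sun_mem
  simp only [WDeriv, w0Deriv, w1Deriv, hc2]
  generalize rho1 _ _ _ = r1 at e1 l1 u1 ⊢
  generalize rho2 _ _ _ = r2 at e2 l2 u2 ⊢
  rcases hab with ⟨rfl, rfl⟩ | ⟨rfl, rfl⟩ <;>
  · simp only [pow_add_two_of_sq_eq e1, pow_add_two_of_sq_eq e2, pow_zero, pow_one,
      div_eq_mul_inv, mul_inv, inv_eq_of_sq_eq e1, inv_eq_of_sq_eq e2]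
    ring_nf
    rw [abs_lt]
    constructor <;>
      linarith [mul_pos (sub_pos.2 l1) (sub_pos.2 l2), mul_pos (sub_pos.2 u1) (sub_pos.2 u2),
        mul_pos (sub_pos.2 l1) (sub_pos.2 u2), mul_pos (sub_pos.2 u1) (sub_pos.2 l2)]

end EarthSun

/-- **Precision of the approximate relativistic `L4` (Earth–Sun).**
With the Earth–Sun values of `μ` and `c`, the paper's high-precision point `Z0`
satisfies `|f(Z0)| < 10⁻³¹` and `|g(Z0)| < 10⁻³¹`. -/
theorem Z0_precision_earth_sun
    (μ c : ℝ) (hμ : μ = 59729 / 19885499729)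
    (hc : c = (149896229 / 10) * Real.sqrt (1495978707 / 3317816087784734))
    (ξ0 η0 : ℝ)
    (hξ0 : ξ0 = 2499985012616009587660193140271 / 5000000000000000000000000000000)
    (hη0 : η0 = 1082531750278361975463116188557 / 1250000000000000000000000000000) :
    |f μ c ξ0 η0| < 1 / 10 ^ 31 ∧ |g μ c ξ0 η0| < 1 / 10 ^ 31 := by
  subst hμ hξ0 hη0
  rw [f_eq_WDeriv (by positivity) (by positivity), g_eq_WDeriv (by positivity) (by positivity)]
  exact ⟨abs_WDeriv_earth_sun_lt hc (.inl ⟨rfl, rfl⟩), abs_WDeriv_earth_sun_lt hc (.inr ⟨rfl, rfl⟩)⟩
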